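/- arXiv:2412.10815 — 2 statements merged into one kernel-verified Lean document; each statement's English description precedes it below -/
import Mathlib

section
/- The Hankel determinant of the moments equals 1/n! times the n-fold Heine integral: det(μ_{i+j})_{i,j=0}^{n-1} = (1/n!) ∫_{ℝ^n} ∏_{1≤i<j≤n} (x_i - x_j)^2 ∏_{k=1}^n w(x_k) dx_k, for any weight w with all moments finite. -/
/-!
Expanding both determinants by the Leibniz formula and integrating term by term (Fubini on the
product measure) gives Andréief's identity: for families `f i`, `g j` of functions,
`∫ det (f i (x j)) * det (g i (x j)) = n! * det (∫ f i * g j)`, because for each fixed `σ` the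
sum over `τ` is, after relabelling, the determinant of the Gram matrix `(∫ f i * g j)`.
Heine's formula is the case `f i t = w t * t ^ i`, `g i t = t ^ i`, where both determinants are
Vandermonde determinants (one with its columns scaled by `w (x j)`) and the Gram matrix is the
Hankel matrix of moments.
-/

open MeasureTheory Equiv

theorem Matrix.sum_perm_sum_perm_sign_mul_prod {ι R : Type*} [Fintype ι] [DecidableEq ι]
    [CommRing R] (A : Matrix ι ι R) :
    ∑ σ : Perm ι, ∑ τ : Perm ι, (Perm.sign σ : R) * Perm.sign τ * ∏ i, A (σ i) (τ i)
      = (Fintype.card ι).factorial * A.det := by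
  have inner (σ : Perm ι) :
      ∑ τ : Perm ι, (Perm.sign σ : R) * Perm.sign τ * ∏ i, A (σ i) (τ i) = A.det := by
    have h := Matrix.det_apply' (A.submatrix σ id).transpose
    simp only [Matrix.det_transpose, Matrix.det_permute, Matrix.transpose_apply,
      Matrix.submatrix_apply, id] at h
    simp_rw [mul_assoc, ← Finset.mul_sum, ← h, ← mul_assoc, ← Int.cast_mul, ← Units.val_mul,
      Int.units_mul_self, Units.val_one, Int.cast_one, one_mul]
  simp_rw [inner, Finset.sum_const, Finset.card_univ, Fintype.card_perm, nsmul_eq_mul]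

theorem Matrix.det_of_apply_mul_det_of_apply {ι α R : Type*} [Fintype ι] [DecidableEq ι]
    [CommRing R] (f g : ι → α → R) (x : ι → α) :
    (Matrix.of fun i j => f i (x j)).det * (Matrix.of fun i j => g i (x j)).det
      = ∑ σ : Perm ι, ∑ τ : Perm ι,
          (Perm.sign σ : R) * Perm.sign τ * ∏ i, f (σ i) (x i) * g (τ i) (x i) := by
  simp only [Matrix.det_apply', Matrix.of_apply, Finset.sum_mul_sum, Finset.prod_mul_distrib]
  exact Finset.sum_congr rfl fun σ _ => Finset.sum_congr rfl fun τ _ => by ring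

theorem integral_det_mul_det_eq_factorial_mul_det {ι α 𝕜 : Type*} [Fintype ι] [DecidableEq ι]
    [RCLike 𝕜] [MeasurableSpace α] (ν : Measure α) [SigmaFinite ν] (f g : ι → α → 𝕜)
    (hfg : ∀ i j, Integrable (fun t => f i t * g j t) ν) :
    (∫ x : ι → α, (Matrix.of fun i j => f i (x j)).det * (Matrix.of fun i j => g i (x j)).det
        ∂Measure.pi fun _ => ν)
      = ((Fintype.card ι).factorial : 𝕜) * (Matrix.of fun i j => ∫ t, f i t * g j t ∂ν).det := by
  have hprod (σ τ : Perm ι) :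
      Integrable (fun x : ι → α => ∏ i, f (σ i) (x i) * g (τ i) (x i)) (Measure.pi fun _ => ν) :=
    Integrable.fintype_prod fun i => hfg (σ i) (τ i)
  simp_rw [Matrix.det_of_apply_mul_det_of_apply]
  rw [integral_finsetSum _ fun σ _ => integrable_finsetSum _ fun τ _ => (hprod σ τ).const_mul _,
    ← Matrix.sum_perm_sum_perm_sign_mul_prod]
  refine Finset.sum_congr rfl fun σ _ => ?_
  rw [integral_finsetSum _ fun τ _ => (hprod σ τ).const_mul _]
  refine Finset.sum_congr rfl fun τ _ => ?_
  rw [integral_const_mul, integral_fintype_prod_eq_prod (fun i t => f (σ i) t * g (τ i) t)]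
  rfl

theorem Matrix.det_vandermonde_sq {n : ℕ} {R : Type*} [CommRing R] (x : Fin n → R) :
    (Matrix.vandermonde x).det ^ 2 = ∏ i : Fin n, ∏ j ∈ Finset.Ioi i, (x i - x j) ^ 2 := by
  simp_rw [Matrix.det_vandermonde, ← Finset.prod_pow]
  exact Finset.prod_congr rfl fun i _ => Finset.prod_congr rfl fun j _ => by ring

theorem Matrix.prod_Ioi_sub_sq_mul_prod_eq_det_mul_det {n : ℕ} {R : Type*} [CommRing R]
    (w : R → R) (x : Fin n → R) :
    (∏ i : Fin n, ∏ j ∈ Finset.Ioi i, (x i - x j) ^ 2) * ∏ k, w (x k)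
      = (Matrix.of fun i j : Fin n => w (x j) * x j ^ (i : ℕ)).det
        * (Matrix.of fun i j : Fin n => x j ^ (i : ℕ)).det := by
  change _ = _ * (Matrix.vandermonde x).transpose.det
  calc (∏ i : Fin n, ∏ j ∈ Finset.Ioi i, (x i - x j) ^ 2) * ∏ k, w (x k)
      = (∏ k, w (x k)) * (Matrix.vandermonde x).transpose.det
          * (Matrix.vandermonde x).transpose.det := by
        rw [Matrix.det_transpose, ← Matrix.det_vandermonde_sq]; ring
    _ = _ := by rw [← Matrix.det_mul_row]; rfl

theorem MeasureTheory.Integrable.pow_mul_of_abs_pow_mul {w : ℝ → ℝ} (hw : AEStronglyMeasurable w) {k : ℕ}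
    (hk : Integrable fun x => |x| ^ k * w x) : Integrable fun x => x ^ k * w x :=
  hk.norm.mono' ((continuous_pow k).aestronglyMeasurable.mul hw)
    (Filter.Eventually.of_forall fun x => by simp)

theorem heine_formula_general (w : ℝ → ℝ)
    (hint : ∀ k : ℕ, Integrable (fun x : ℝ => |x|^k * w x))
    (μ : ℕ → ℝ) (hμ : ∀ k, μ k = ∫ x : ℝ, x^k * w x) (n : ℕ) :
    Matrix.det (Matrix.of fun i j : Fin n => μ (i.1 + j.1))
      = (1 / n.factorial : ℝ) * ∫ x : Fin n → ℝ,
          (∏ i : Fin n, ∏ j ∈ Finset.Ioi i, (x i - x j)^2) * ∏ k : Fin n, w (x k) := by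
  have hw : AEStronglyMeasurable w := by simpa using (hint 0).aestronglyMeasurable
  have hhankel : (Matrix.of fun i j : Fin n => μ (i.1 + j.1))
      = Matrix.of fun i j : Fin n => ∫ t, w t * t ^ (i : ℕ) * t ^ (j : ℕ) := by
    ext i j
    rw [Matrix.of_apply, Matrix.of_apply, hμ]
    exact integral_congr_ae (Filter.Eventually.of_forall fun t => by ring)
  simp_rw [Matrix.prod_Ioi_sub_sq_mul_prod_eq_det_mul_det]
  rw [volume_pi, integral_det_mul_det_eq_factorial_mul_det volume
      (fun (i : Fin n) t => w t * t ^ (i : ℕ)) (fun (i : Fin n) t => t ^ (i : ℕ)), hhankel,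
    Fintype.card_fin, one_div, inv_mul_cancel_left₀ (by positivity)]
  exact fun i j => ((hint (i + j)).pow_mul_of_abs_pow_mul hw).congr
    (Filter.Eventually.of_forall fun t => by ring)

theorem heine_formula (w : ℝ → ℝ) (hw : ∀ x, 0 ≤ w x) (hwm : Measurable w)
    (hint : ∀ k : ℕ, Integrable (fun x : ℝ => |x|^k * w x))
    (μ : ℕ → ℝ) (hμ : ∀ k, μ k = ∫ x : ℝ, x^k * w x) (n : ℕ) :
    Matrix.det (Matrix.of fun i j : Fin n => μ (i.1 + j.1))
      = (1 / n.factorial : ℝ) * ∫ x : Fin n → ℝ,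
          (∏ i : Fin n, ∏ j ∈ Finset.Ioi i, (x i - x j)^2) * ∏ k : Fin n, w (x k) :=
  heine_formula_general w hint μ hμ n
end

section
/- For any real b > 0 and nonnegative integer k, the principal value integral P ∫_{-b}^{b} dx / ((x - y)√(b^2 - x^2)) = 0 for every y ∈ (-b, b). -/
/-!
With `c = √(b² - y²)` and `G x = b² - x y + c √(b² - x²)`, the function
`F x = (log |x - y| - log (G x)) / c` is a primitive of `1 / ((x - y) √(b² - x²))` on
`[-b, b] \ {y}`. Both end values equal `-(log b) / c`, so the truncated integral equals
`F (y - ε) - F (y + ε)`. There the singular terms `log ε` cancel, leaving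
`(log (G (y + ε)) - log (G (y - ε))) / c`, which tends to `0` because `G` is continuous and
positive at `y`.
-/

open MeasureTheory Set Filter Topology

theorem integrableOn_deriv_of_nonpos {g g' : ℝ → ℝ} {a b : ℝ} (hcont : ContinuousOn g (Icc a b))
    (hderiv : ∀ x ∈ Ioo a b, HasDerivAt g (g' x) x) (hneg : ∀ x ∈ Ioo a b, g' x ≤ 0) :
    IntegrableOn g' (Ioc a b) := by
  simpa only [Pi.neg_def, neg_neg] using (intervalIntegral.integrableOn_deriv_of_nonneg hcont.neg
    (fun x hx => (hderiv x hx).neg) fun x hx => neg_nonneg.2 (hneg x hx)).neg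

theorem integral_Ioo_eq_sub_of_hasDerivAt {F f : ℝ → ℝ} {u v : ℝ} (huv : u ≤ v)
    (hcont : ContinuousOn F (Icc u v)) (hderiv : ∀ x ∈ Ioo u v, HasDerivAt F (f x) x)
    (hint : IntervalIntegrable f volume u v) :
    ∫ x in Ioo u v, f x = F v - F u := by
  rw [← integral_Ioc_eq_integral_Ioo, ← intervalIntegral.integral_of_le huv]
  exact intervalIntegral.integral_eq_sub_of_hasDerivAt_of_le huv hcont hderiv hint

noncomputable def pvDenom (b y x : ℝ) : ℝ :=
  b ^ 2 - x * y + √(b ^ 2 - y ^ 2) * √(b ^ 2 - x ^ 2)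

/-- `Real.log` is `log |·|`, so this is a primitive of the kernel on both sides of `y`. -/
noncomputable def pvPrimitive (b y x : ℝ) : ℝ :=
  (Real.log (x - y) - Real.log (pvDenom b y x)) / √(b ^ 2 - y ^ 2)

section

variable {b y x : ℝ}

theorem pvDenom_pos (hy : y ∈ Ioo (-b) b) (hx : x ∈ Icc (-b) b) : 0 < pvDenom b y x := by
  obtain ⟨hy₁, hy₂⟩ := hy
  obtain ⟨hx₁, hx₂⟩ := hx
  have hxy : x * y < b ^ 2 := by
    have hx' : |x| ≤ b := abs_le.2 ⟨hx₁, hx₂⟩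
    have hy' : |y| < b := abs_lt.2 ⟨hy₁, hy₂⟩
    calc x * y ≤ |x| * |y| := (le_abs_self _).trans (abs_mul x y).le
      _ < b ^ 2 := by nlinarith [abs_nonneg x, abs_nonneg y]
  unfold pvDenom
  nlinarith [mul_nonneg (Real.sqrt_nonneg (b ^ 2 - y ^ 2)) (Real.sqrt_nonneg (b ^ 2 - x ^ 2))]

theorem continuousAt_log_pvDenom (hy : y ∈ Ioo (-b) b) (hx : x ∈ Icc (-b) b) :
    ContinuousAt (fun t => Real.log (pvDenom b y t)) x :=
  (by unfold pvDenom; fun_prop : Continuous (pvDenom b y)).continuousAt.log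
    (pvDenom_pos hy hx).ne'

theorem continuousAt_pvPrimitive (hy : y ∈ Ioo (-b) b) (hx : x ∈ Icc (-b) b) (hxy : x ≠ y) :
    ContinuousAt (pvPrimitive b y) x :=
  (((continuousAt_id.sub continuousAt_const).log (sub_ne_zero.2 hxy)).sub
    (continuousAt_log_pvDenom hy hx)).div_const _

theorem hasDerivAt_pvPrimitive (hy : y ∈ Ioo (-b) b) (hx : x ∈ Ioo (-b) b) (hxy : x ≠ y) :
    HasDerivAt (pvPrimitive b y) (1 / ((x - y) * √(b ^ 2 - x ^ 2))) x := by
  obtain ⟨hy₁, hy₂⟩ := hy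
  obtain ⟨hx₁, hx₂⟩ := hx
  have hbx : 0 < b ^ 2 - x ^ 2 := by nlinarith
  have hby : 0 < b ^ 2 - y ^ 2 := by nlinarith
  set s := √(b ^ 2 - x ^ 2)
  set c := √(b ^ 2 - y ^ 2)
  have hs_pos : 0 < s := Real.sqrt_pos.2 hbx
  have hc_pos : 0 < c := Real.sqrt_pos.2 hby
  have hs_sq : s ^ 2 = b ^ 2 - x ^ 2 := Real.sq_sqrt hbx.le
  have hc_sq : c ^ 2 = b ^ 2 - y ^ 2 := Real.sq_sqrt hby.le
  have hG : b ^ 2 - x * y + c * s ≠ 0 := (pvDenom_pos ⟨hy₁, hy₂⟩ ⟨hx₁.le, hx₂.le⟩).ne'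
  have hsqrt : HasDerivAt (fun t => √(b ^ 2 - t ^ 2)) (-x / s) x := by
    convert ((hasDerivAt_pow 2 x).const_sub (b ^ 2)).sqrt hbx.ne' using 1
    field_simp
    ring
  have hlin : HasDerivAt (fun t => b ^ 2 - t * y) (-y) x := by
    simpa using ((hasDerivAt_id x).mul_const y).const_sub (b ^ 2)
  have hdenom : HasDerivAt (pvDenom b y) (-y + c * (-x / s)) x := hlin.add (hsqrt.const_mul c)
  refine ((((hasDerivAt_id x).sub_const y).log (sub_ne_zero.2 hxy)).sub
    (hdenom.log hG)).div_const c |>.congr_deriv ?_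
  have hxy' : x - y ≠ 0 := sub_ne_zero.2 hxy
  rw [id, show pvDenom b y x = b ^ 2 - x * y + c * s from rfl]
  field_simp
  linear_combination c * hs_sq - s * hc_sq

theorem pvPrimitive_endpoints_eq (hy : y ∈ Ioo (-b) b) :
    pvPrimitive b y (-b) = pvPrimitive b y b := by
  obtain ⟨hy₁, hy₂⟩ := hy
  have hb : 0 < b := by linarith
  have hG₁ : pvDenom b y (-b) = b * (b + y) := by simp [pvDenom]; ring
  have hG₂ : pvDenom b y b = b * (b - y) := by simp [pvDenom]; ring
  rw [pvPrimitive, pvPrimitive, hG₁, hG₂, show -b - y = -(b + y) by ring, Real.log_neg_eq_log,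
    Real.log_mul hb.ne' (by linarith), Real.log_mul hb.ne' (by linarith)]
  ring

theorem pvPrimitive_sub_pvPrimitive (ε : ℝ) :
    pvPrimitive b y (y - ε) - pvPrimitive b y (y + ε) =
      (Real.log (pvDenom b y (y + ε)) - Real.log (pvDenom b y (y - ε))) / √(b ^ 2 - y ^ 2) := by
  simp only [pvPrimitive, sub_sub_cancel_left, add_sub_cancel_left, Real.log_neg_eq_log]
  ring

theorem integral_Ioo_eq_pvPrimitive_sub {u v : ℝ} (hy : y ∈ Ioo (-b) b) (hu : -b ≤ u)
    (hv : v ≤ b) (huv : u ≤ v) (hyuv : y ∉ Icc u v) :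
    ∫ x in Ioo u v, 1 / ((x - y) * √(b ^ 2 - x ^ 2)) = pvPrimitive b y v - pvPrimitive b y u := by
  have hne : ∀ x ∈ Icc u v, x ≠ y := fun x hx h => hyuv (h ▸ hx)
  have hcont : ContinuousOn (pvPrimitive b y) (Icc u v) := fun x hx =>
    (continuousAt_pvPrimitive hy ⟨hu.trans hx.1, hx.2.trans hv⟩ (hne x hx)).continuousWithinAt
  have hderiv : ∀ x ∈ Ioo u v, HasDerivAt (pvPrimitive b y) (1 / ((x - y) * √(b ^ 2 - x ^ 2))) x :=
    fun x hx => hasDerivAt_pvPrimitive hy ⟨hu.trans_lt hx.1, hx.2.trans_le hv⟩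
      (hne x (Ioo_subset_Icc_self hx))
  refine integral_Ioo_eq_sub_of_hasDerivAt huv hcont hderiv
    ((intervalIntegrable_iff_integrableOn_Ioc_of_le huv).2 ?_)
  rcases not_and_or.1 hyuv with hyu | hyv
  · refine intervalIntegral.integrableOn_deriv_of_nonneg hcont hderiv fun x hx => ?_
    exact one_div_nonneg.2 (mul_nonneg (by linarith [hx.1]) (Real.sqrt_nonneg _))
  · refine integrableOn_deriv_of_nonpos hcont hderiv fun x hx => ?_
    exact one_div_nonpos.2 (mul_nonpos_of_nonpos_of_nonneg (by linarith [hx.2])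
      (Real.sqrt_nonneg _))

end

theorem principal_value_vanishes_general (b : ℝ) (y : ℝ) (hy : y ∈ Set.Ioo (-b) b) :
    Filter.Tendsto (fun ε : ℝ =>
        (∫ x in Set.Ioo (-b) (y - ε), 1/((x - y)*Real.sqrt (b^2 - x^2))) +
        ∫ x in Set.Ioo (y + ε) b, 1/((x - y)*Real.sqrt (b^2 - x^2)))
      (nhdsWithin 0 (Set.Ioi 0)) (nhds 0) := by
  set H : ℝ → ℝ := fun x => Real.log (pvDenom b y x)
  have hH : ContinuousAt H y := continuousAt_log_pvDenom hy (Ioo_subset_Icc_self hy)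
  have hlim : Tendsto (fun ε => (H (y + ε) - H (y - ε)) / √(b ^ 2 - y ^ 2)) (𝓝[>] 0) (𝓝 0) := by
    have hplus := hH.tendsto.comp ((continuous_const_add y).tendsto' 0 y (add_zero y))
    have hminus := hH.tendsto.comp ((continuous_sub_left y).tendsto' 0 y (sub_zero y))
    simpa using ((hplus.sub hminus).div_const _).mono_left nhdsWithin_le_nhds
  refine hlim.congr' ?_
  filter_upwards [Ioo_mem_nhdsGT (lt_min (sub_pos.2 hy.2) (neg_lt_iff_pos_add.1 hy.1))]
    with ε ⟨hε, hεb⟩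
  have hε₁ : ε < b - y := hεb.trans_le (min_le_left _ _)
  have hε₂ : ε < y + b := hεb.trans_le (min_le_right _ _)
  rw [integral_Ioo_eq_pvPrimitive_sub hy le_rfl (by linarith) (by linarith)
      fun h => by linarith [h.2],
    integral_Ioo_eq_pvPrimitive_sub hy (by linarith) le_rfl (by linarith)
      fun h => by linarith [h.1],
    pvPrimitive_endpoints_eq hy, ← pvPrimitive_sub_pvPrimitive]
  ring

theorem principal_value_vanishes (b : ℝ) (hb : 0 < b) (y : ℝ) (hy : y ∈ Set.Ioo (-b) b) :
    Filter.Tendsto (fun ε : ℝ =>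
        (∫ x in Set.Ioo (-b) (y - ε), 1/((x - y)*Real.sqrt (b^2 - x^2))) +
        ∫ x in Set.Ioo (y + ε) b, 1/((x - y)*Real.sqrt (b^2 - x^2)))
      (nhdsWithin 0 (Set.Ioi 0)) (nhds 0) :=
  principal_value_vanishes_general b y hy
end
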